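/- For the turn-based game graph of Figure 2, there does not exist a proper subset ρ ⊊ ρ1 of player 1's edge relation such that the property □(ρ0 ∧ ρ) ∧ □◇G1 ∧ □◇G2 is satisfiable. That is, for every ρ ⊊ ρ1 there is no infinite sequence w : ℕ → V in which every step from a node owned by player 0 is an edge of ρ0 and every step from a node owned by player 1 is an edge of ρ, and which visits s6 infinitely often and visits s0 infinitely often. -/
import Mathlib


namespace Fig2

/-- Nodes `s0, …, s6` of the game graph of Figure 2. -/
abbrev V := Fin 7

/-- Player 0 owns the odd-indexed nodes `s1, s3, s5`;
player 1 owns the even-indexed nodes `s0, s2, s4, s6`. -/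
def owner : V → Fin 2 := fun v => if v.val % 2 = 1 then 0 else 1

/-- The edge relation of player `j`:
`ρ0 = {s1→s0, s1→s2, s3→s2, s3→s4, s5→s6}` and
`ρ1 = {s0→s1, s2→s3, s4→s1, s4→s5, s6→s3}`. -/
def ρ : Fin 2 → V → V → Prop := fun j v u =>
  ((j.val, v.val, u.val) : ℕ × ℕ × ℕ) ∈
    [(0,1,0), (0,1,2), (0,3,2), (0,3,4), (0,5,6),
     (1,0,1), (1,2,3), (1,4,1), (1,4,5), (1,6,3)]

/-- An infinite play: every step is an edge of the player owning the current node. -/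
def IsPlay (w : ℕ → V) : Prop := ∀ k : ℕ, ρ (owner (w k)) (w k) (w (k + 1))

/-- A strategy maps a finite history together with the current node to the next node. -/
abbrev Strategy := List V → V → V

/-- A strategy of player `j` must choose edges of `ρ j` at nodes owned by player `j`. -/
def ValidStrategy (j : Fin 2) (σ : Strategy) : Prop :=
  ∀ (h : List V) (v : V), owner v = j → ρ j v (σ h v)

/-- A play is consistent with a strategy of player `j` if at every position owned
by player `j`, the next node is the one chosen by the strategy. -/
def Consistent (j : Fin 2) (σ : Strategy) (w : ℕ → V) : Prop :=
  ∀ k : ℕ, owner (w k) = j → w (k + 1) = σ ((List.range k).map w) (w k)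

/-- `□◇P`: the play visits `P` infinitely often. -/
def InfOften (P : Set V) (w : ℕ → V) : Prop := ∀ N : ℕ, ∃ k ≥ N, w k ∈ P

/-- Player `j` realizes property `φ` from node `v`. -/
def Realizes (j : Fin 2) (v : V) (φ : (ℕ → V) → Prop) : Prop :=
  ∃ σ : Strategy, ValidStrategy j σ ∧
    ∀ w : ℕ → V, IsPlay w → w 0 = v → Consistent j σ w → φ w

/-- The goal set `G1 = {s6}` of the game of Figure 2. -/
def G1 : Set V := {6}

/-- The goal set `G2 = {s0}` of the game of Figure 2. -/
def G2 : Set V := {0}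

/-- in the game of Figure 2, there is no proper subset `ρ' ⊊ ρ1` of
player 1's edge relation such that `□(ρ0 ∧ ρ') ∧ □◇G1 ∧ □◇G2` is satisfiable:
for every such `ρ'`, there is no infinite sequence `w` in which every step from
a player-0 node is an edge of `ρ0`, every step from a player-1 node is an edge
of `ρ'`, and `w` visits `s6` infinitely often and `s0` infinitely often. -/
theorem no_safety_assumption
    (ρ' : V → V → Prop)
    (hsub : ∀ a b : V, ρ' a b → ρ 1 a b)
    (hproper : ¬ ∀ a b : V, ρ 1 a b → ρ' a b) :
    ¬ ∃ w : ℕ → V,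
        (∀ k : ℕ, (owner (w k) = 0 → ρ 0 (w k) (w (k + 1))) ∧
                  (owner (w k) = 1 → ρ' (w k) (w (k + 1)))) ∧
        InfOften G1 w ∧ InfOften G2 w := by
  rintro ⟨w, hstep, h1, h2⟩
  -- ownership dichotomy
  have hown : ∀ v : V, owner v = 0 ∨ owner v = 1 := by
    intro v; unfold owner; split <;> simp
  -- every step is a player-0 edge or a ρ' edge (which is a ρ1 edge)
  have hnum : ∀ k, ρ 0 (w k) (w (k+1)) ∨ (ρ 1 (w k) (w (k+1)) ∧ ρ' (w k) (w (k+1))) := by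
    intro k
    rcases hown (w k) with h | h
    · exact Or.inl ((hstep k).1 h)
    · have hp := (hstep k).2 h
      exact Or.inr ⟨hsub _ _ hp, hp⟩
  -- predecessor / successor facts
  have h0pred : ∀ k, (w (k+1)).val = 0 → (w k).val = 1 := by
    intro k h; rcases hnum k with hh | ⟨hh, _⟩ <;> simp [ρ] at hh <;> omega
  have h1pred : ∀ k, (w (k+1)).val = 1 →
      ((w k).val = 0 ∨ (w k).val = 4) ∧ ρ' (w k) (w (k+1)) := by
    intro k h; rcases hnum k with hh | ⟨hh, hp⟩ <;> simp [ρ] at hh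
    · omega
    · exact ⟨by omega, hp⟩
  have h6pred : ∀ k, (w (k+1)).val = 6 → (w k).val = 5 := by
    intro k h; rcases hnum k with hh | ⟨hh, _⟩ <;> simp [ρ] at hh <;> omega
  have h5pred : ∀ k, (w (k+1)).val = 5 → (w k).val = 4 ∧ ρ' (w k) (w (k+1)) := by
    intro k h; rcases hnum k with hh | ⟨hh, hp⟩ <;> simp [ρ] at hh
    · omega
    · exact ⟨by omega, hp⟩
  have h4pred : ∀ k, (w (k+1)).val = 4 → (w k).val = 3 := by
    intro k h; rcases hnum k with hh | ⟨hh, _⟩ <;> simp [ρ] at hh <;> omega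
  have h3pred : ∀ k, (w (k+1)).val = 3 →
      ((w k).val = 2 ∨ (w k).val = 6) ∧ ρ' (w k) (w (k+1)) := by
    intro k h; rcases hnum k with hh | ⟨hh, hp⟩ <;> simp [ρ] at hh
    · omega
    · exact ⟨by omega, hp⟩
  have h0succ : ∀ k, (w k).val = 0 → (w (k+1)).val = 1 ∧ ρ' (w k) (w (k+1)) := by
    intro k h; rcases hnum k with hh | ⟨hh, hp⟩ <;> simp [ρ] at hh
    · omega
    · exact ⟨by omega, hp⟩
  have h6succ : ∀ k, (w k).val = 6 → (w (k+1)).val = 3 ∧ ρ' (w k) (w (k+1)) := by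
    intro k h; rcases hnum k with hh | ⟨hh, hp⟩ <;> simp [ρ] at hh
    · omega
    · exact ⟨by omega, hp⟩
  -- claim A: between a visit to s6 and a later visit to s0, the edge s4→s1 is used
  have claimA : ∀ k, ∀ m < k, (w k).val = 0 → (w m).val = 6 →
      ∃ j, (w j).val = 4 ∧ (w (j+1)).val = 1 ∧ ρ' (w j) (w (j+1)) := by
    intro k
    induction k using Nat.strong_induction_on with
    | _ k ih =>
      intro m hm h0 h6
      obtain ⟨k', rfl⟩ : ∃ k', k = k' + 1 := ⟨k - 1, by omega⟩
      have hk1 : (w k').val = 1 := h0pred k' h0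
      have hmk' : m < k' := by
        rcases Nat.lt_or_ge m k' with h | h
        · exact h
        · exfalso; have : m = k' := by omega
          subst this; omega
      obtain ⟨j, rfl⟩ : ∃ j, k' = j + 1 := ⟨k' - 1, by omega⟩
      obtain ⟨hj, hpj⟩ := h1pred j hk1
      rcases hj with hj | hj
      · -- predecessor is s0: recurse
        have hmj : m < j := by
          rcases Nat.lt_or_ge m j with h | h
          · exact h
          · exfalso; have : m = j := by omega
            subst this; omega
        exact ih j (by omega) m hmj hj h6
      · exact ⟨j, hj, hk1, hpj⟩
  -- claim B: between a visit to s0 and a later visit to s6, the edge s2→s3 is used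
  have claimB : ∀ k, ∀ m < k, (w k).val = 6 → (w m).val = 0 →
      ∃ j, (w j).val = 2 ∧ (w (j+1)).val = 3 ∧ ρ' (w j) (w (j+1)) := by
    intro k
    induction k using Nat.strong_induction_on with
    | _ k ih =>
      intro m hm h6 h0
      obtain ⟨k3, rfl⟩ : ∃ k3, k = k3 + 1 := ⟨k - 1, by omega⟩
      have hk3 : (w k3).val = 5 := h6pred k3 h6
      have hm3 : m < k3 := by
        rcases Nat.lt_or_ge m k3 with h | h
        · exact h
        · exfalso; have : m = k3 := by omega
          subst this; omega
      obtain ⟨k2, rfl⟩ : ∃ k2, k3 = k2 + 1 := ⟨k3 - 1, by omega⟩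
      have hk2 : (w k2).val = 4 := (h5pred k2 hk3).1
      have hm2 : m < k2 := by
        rcases Nat.lt_or_ge m k2 with h | h
        · exact h
        · exfalso; have : m = k2 := by omega
          subst this; omega
      obtain ⟨k1, rfl⟩ : ∃ k1, k2 = k1 + 1 := ⟨k2 - 1, by omega⟩
      have hk1 : (w k1).val = 3 := h4pred k1 hk2
      have hm1 : m < k1 := by
        rcases Nat.lt_or_ge m k1 with h | h
        · exact h
        · exfalso; have : m = k1 := by omega
          subst this; omega
      obtain ⟨j, rfl⟩ : ∃ j, k1 = j + 1 := ⟨k1 - 1, by omega⟩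
      obtain ⟨hj, hpj⟩ := h3pred j hk1
      rcases hj with hj | hj
      · exact ⟨j, hj, hk1, hpj⟩
      · have hmj : m < j := by
          rcases Nat.lt_or_ge m j with h | h
          · exact h
          · exfalso; have : m = j := by omega
            subst this; omega
        exact ih j (by omega) m hmj hj h0
  -- pick the visits
  obtain ⟨m0, -, hm0⟩ := h2 0
  obtain ⟨k6, hk6ge, hk6⟩ := h1 (m0 + 1)
  obtain ⟨k0, hk0ge, hk0⟩ := h2 (k6 + 1)
  have hm0v : (w m0).val = 0 := by
    simp only [G2, Set.mem_singleton_iff] at hm0; rw [hm0]; rfl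
  have hk6v : (w k6).val = 6 := by
    simp only [G1, Set.mem_singleton_iff] at hk6; rw [hk6]; rfl
  have hk0v : (w k0).val = 0 := by
    simp only [G2, Set.mem_singleton_iff] at hk0; rw [hk0]; rfl
  -- all five edges of ρ 1 are in ρ'
  obtain ⟨e01a, e01⟩ := h0succ m0 hm0v
  obtain ⟨e63a, e63⟩ := h6succ k6 hk6v
  -- the edge s4→s5 just before k6
  obtain ⟨t, rfl⟩ : ∃ t, k6 = t + 1 := ⟨k6 - 1, by omega⟩
  have ht5 : (w t).val = 5 := h6pred t hk6v
  have htm : m0 < t := by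
    rcases Nat.lt_or_ge m0 t with h | h
    · exact h
    · exfalso; have : m0 = t := by omega
      subst this; omega
  obtain ⟨t', rfl⟩ : ∃ t', t = t' + 1 := ⟨t - 1, by omega⟩
  obtain ⟨e45a, e45⟩ := h5pred t' ht5
  obtain ⟨j1, hj1a, hj1b, e41⟩ := claimA k0 (t'+1+1) (by omega) hk0v hk6v
  obtain ⟨j2, hj2a, hj2b, e23⟩ := claimB (t'+1+1) m0 (by omega) hk6v hm0v
  -- contradiction with properness
  apply hproper
  intro a b hab
  simp [ρ] at hab
  have fext : ∀ (x y : V), x.val = y.val → x = y := fun x y h => Fin.ext h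
  rcases hab with ⟨ha, hb⟩ | ⟨ha, hb⟩ | ⟨ha, hb⟩ | ⟨ha, hb⟩ | ⟨ha, hb⟩
  · have : a = w m0 := fext _ _ (by omega)
    have hb' : b = w (m0+1) := fext _ _ (by omega)
    rw [this, hb']; exact e01
  · have : a = w j2 := fext _ _ (by omega)
    have hb' : b = w (j2+1) := fext _ _ (by omega)
    rw [this, hb']; exact e23
  · have : a = w j1 := fext _ _ (by omega)
    have hb' : b = w (j1+1) := fext _ _ (by omega)
    rw [this, hb']; exact e41
  · have : a = w t' := fext _ _ (by omega)
    have hb' : b = w (t'+1) := fext _ _ (by omega)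
    rw [this, hb']; exact e45
  · have : a = w (t'+1+1) := fext _ _ (by omega)
    have hb' : b = w (t'+1+1+1) := fext _ _ (by omega)
    rw [this, hb']; exact e63

end Fig2
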